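/- arXiv:2206.09390 — 4 statements merged into one kernel-verified Lean document; each statement's English description precedes it below -/
import Mathlib

section
/- Let T, T¹ be random variables on a probability space with T ≤ T¹ almost surely and let A be an event such that, conditioned on A, the overshoot T¹ - T is independent of T and satisfies E[T¹ - T | A] = E[T¹]. Then E[T] = P(Aᶜ) · E[T¹], where Aᶜ is the complement of A, provided T¹ - T = 0 on Aᶜ. -/
open MeasureTheory

/-- If `T ≤ T¹` a.s., `T¹ - T = 0` on `Aᶜ`, and `E[(T¹-T)1_A] = P(A)·E[T¹]`
(the memoryless restart property `E[T¹-T | A] = E[T¹]`), then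
`E[T] = P(Aᶜ)·E[T¹]`. -/
theorem exit_time_expectation {Ω : Type*} [MeasurableSpace Ω]
    (μ : Measure Ω) [IsProbabilityMeasure μ]
    (T T1 : Ω → ℝ) (hT : Integrable T μ) (hT1 : Integrable T1 μ)
    (A : Set Ω) (hA : MeasurableSet A)
    (hle : ∀ᵐ ω ∂μ, T ω ≤ T1 ω)
    (hcond : ∫ ω in A, (T1 ω - T ω) ∂μ = (μ A).toReal * ∫ ω, T1 ω ∂μ)
    (hzero : ∀ᵐ ω ∂μ, ω ∈ Aᶜ → T1 ω - T ω = 0) :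
    ∫ ω, T ω ∂μ = (μ Aᶜ).toReal * ∫ ω, T1 ω ∂μ := by
  have hint : Integrable (fun ω => T1 ω - T ω) μ := hT1.sub hT
  have hAc : ∫ ω in Aᶜ, (T1 ω - T ω) ∂μ = 0 := by
    rw [setIntegral_congr_ae hA.compl (hzero.mono fun ω h hm => h hm)]
    simp
  have hsplit : ∫ ω, (T1 ω - T ω) ∂μ
      = ∫ ω in A, (T1 ω - T ω) ∂μ + ∫ ω in Aᶜ, (T1 ω - T ω) ∂μ :=
    (integral_add_compl hA hint).symm
  have hsub : ∫ ω, (T1 ω - T ω) ∂μ = ∫ ω, T1 ω ∂μ - ∫ ω, T ω ∂μ :=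
    integral_sub hT1 hT
  have hμ : (μ Aᶜ).toReal = 1 - (μ A).toReal := by
    have h1 : μ A ≤ 1 := prob_le_one
    have := measure_compl hA (measure_ne_top μ A)
    rw [this, measure_univ, ENNReal.toReal_sub_of_le h1 ENNReal.one_ne_top]
    simp
  rw [hAc, add_zero, hsub, hcond] at hsplit
  rw [hμ]
  linarith
end

section
/- For 0 < δ < p < 1 with p - δ > 0 and 1 - p + δ < 1, the exponent r(p, p-δ) = (log p · log(1-p+δ) - log(p-δ) · log(1-p)) / (log(p(1-p)) + log((p-δ)(1-p+δ))) satisfies r(p, p-δ) ≥ (1 - δ/p) · (δ·H_b(p) - δ²·log(1-p)) / (δ(1 - 2(p-δ)) - 2(p-δ)(1-p+δ)·log(p(1-p))), where H_b(p) = -p log p - (1-p) log(1-p). -/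
/-!
Write `A, B, C, D` for the natural logarithms of `p, 1 - p, p - δ, 1 - p + δ`. The tangent-line
bounds `(x - y) / x ≤ log x - log y ≤ (x - y) / y` control the increments `A - C` and `D - B`.
Since `C B - A D = (A - C)(-B) + (D - B)(-A)`, their lower bounds bound the numerator of `r`
from below by an entropy-like expression, while `A - C ≤ δ / (p - δ)` and `D - B ≥ δ / (1 - p + δ)`
bound the denominator of `r` from above. Passing from natural logarithms to base `2` costs only
the factor `log 2 ≤ 1`.
-/

open Real

namespace Real

lemma sub_div_le_log_sub_log {x y : ℝ} (hx : 0 < x) (hy : 0 < y) :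
    (x - y) / x ≤ log x - log y := by
  have h := one_sub_inv_le_log_of_pos (div_pos hx hy)
  rwa [log_div hx.ne' hy.ne', inv_div, one_sub_div hx.ne'] at h

lemma log_sub_log_le_sub_div {x y : ℝ} (hx : 0 < x) (hy : 0 < y) :
    log x - log y ≤ (x - y) / y := by
  have h := log_le_sub_one_of_pos (div_pos hx hy)
  rwa [log_div hx.ne' hy.ne', div_sub_one hy.ne'] at h

end Real

section ExponentBounds

variable {p δ : ℝ}

lemma delta_mul_neg_log_le_log_cross (hp0 : 0 < p) (hp1 : p < 1) (hq : 0 < p - δ)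
    (hs : 0 < 1 - p + δ) :
    δ * (p * -log p + (1 - p + δ) * -log (1 - p)) ≤
      p * (1 - p + δ) * (log (p - δ) * log (1 - p) - log p * log (1 - p + δ)) := by
  have hu : δ / p ≤ log p - log (p - δ) := by
    simpa using sub_div_le_log_sub_log hp0 hq
  have hv : δ / (1 - p + δ) ≤ log (1 - p + δ) - log (1 - p) := by
    simpa using sub_div_le_log_sub_log hs (sub_pos.2 hp1)
  have hA : 0 ≤ -log p := neg_nonneg.2 (log_nonpos hp0.le hp1.le)
  have hB : 0 ≤ -log (1 - p) := neg_nonneg.2 (log_nonpos (by linarith) (by linarith))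
  have hcross : log (p - δ) * log (1 - p) - log p * log (1 - p + δ) =
      (log p - log (p - δ)) * -log (1 - p) + (log (1 - p + δ) - log (1 - p)) * -log p := by
    ring
  calc δ * (p * -log p + (1 - p + δ) * -log (1 - p))
      = p * (1 - p + δ) * (δ / p * -log (1 - p) + δ / (1 - p + δ) * -log p) := by
        field_simp; ring
    _ ≤ _ := by rw [hcross]; gcongr

lemma neg_log_sum_le (hp0 : 0 < p) (hp1 : p < 1) (hq : 0 < p - δ) (hs : 0 < 1 - p + δ) :
    (p - δ) * (1 - p + δ) * -(log (p * (1 - p)) + log ((p - δ) * (1 - p + δ))) ≤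
      δ * (1 - 2 * (p - δ)) - 2 * (p - δ) * (1 - p + δ) * log (p * (1 - p)) := by
  have hu : log p - log (p - δ) ≤ δ / (p - δ) := by
    simpa using log_sub_log_le_sub_div hp0 hq
  have hv : δ / (1 - p + δ) ≤ log (1 - p + δ) - log (1 - p) := by
    simpa using sub_div_le_log_sub_log hs (sub_pos.2 hp1)
  rw [log_mul hp0.ne' (sub_pos.2 hp1).ne', log_mul hq.ne' hs.ne']
  calc (p - δ) * (1 - p + δ) * -(log p + log (1 - p) + (log (p - δ) + log (1 - p + δ)))
      = (p - δ) * (1 - p + δ) * (log p - log (p - δ)) -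
          (p - δ) * (1 - p + δ) * (log (1 - p + δ) - log (1 - p)) -
          2 * (p - δ) * (1 - p + δ) * (log p + log (1 - p)) := by ring
    _ ≤ (p - δ) * (1 - p + δ) * (δ / (p - δ)) - (p - δ) * (1 - p + δ) * (δ / (1 - p + δ)) -
          2 * (p - δ) * (1 - p + δ) * (log p + log (1 - p)) := by gcongr
    _ = _ := by field_simp; ring

lemma mul_neg_log_sum_le {c : ℝ} (hc0 : 0 ≤ c) (hc1 : c ≤ 1) (hp0 : 0 < p) (hp1 : p < 1)
    (hq : 0 < p - δ) (hs : 0 < 1 - p + δ) :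
    c * ((p - δ) * (1 - p + δ) * -(log (p * (1 - p)) + log ((p - δ) * (1 - p + δ)))) ≤
      c * (δ * (1 - 2 * (p - δ))) - 2 * (p - δ) * (1 - p + δ) * log (p * (1 - p)) := by
  have hpq : 0 ≤ 2 * (p - δ) * (1 - p + δ) * -log (p * (1 - p)) := by
    have : 0 ≤ -log (p * (1 - p)) :=
      neg_nonneg.2 (log_nonpos (by nlinarith) (by nlinarith))
    positivity
  nlinarith [mul_le_mul_of_nonneg_left (neg_log_sum_le hp0 hp1 hq hs) hc0,
    mul_le_of_le_one_left hpq hc1]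

end ExponentBounds

/-- Lower bound on the exponent `r(p, p-δ)` in terms of the binary entropy
`H_b(p) = -p log₂ p - (1-p) log₂(1-p)`. -/
theorem exponent_lower_bound (p δ : ℝ) (h0 : 0 < δ) (hδp : δ < p) (hp1 : p < 1) :
    (1 - δ / p) *
        (δ * (-(p * logb 2 p) - (1 - p) * logb 2 (1 - p)) - δ ^ 2 * logb 2 (1 - p)) /
        (δ * (1 - 2 * (p - δ)) - 2 * (p - δ) * (1 - p + δ) * logb 2 (p * (1 - p)))
      ≤ (logb 2 p * logb 2 (1 - p + δ) - logb 2 (p - δ) * logb 2 (1 - p)) /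
        (logb 2 (p * (1 - p)) + logb 2 ((p - δ) * (1 - p + δ))) := by
  have hp0 : 0 < p := h0.trans hδp
  have hq : 0 < p - δ := sub_pos.2 hδp
  have hs : 0 < 1 - p + δ := by linarith
  have hL : 0 < log 2 := log_pos one_lt_two
  have hsum : log (p * (1 - p)) + log ((p - δ) * (1 - p + δ)) < 0 :=
    add_neg (log_neg (by nlinarith) (by nlinarith)) (log_neg (by positivity) (by nlinarith))
  have hnum := delta_mul_neg_log_le_log_cross hp0 hp1 hq hs
  have hnum_nonneg : 0 ≤ δ * (p * -log p + (1 - p + δ) * -log (1 - p)) := by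
    have := neg_nonneg.2 (log_nonpos hp0.le hp1.le)
    have := neg_nonneg.2 (log_nonpos (sub_pos.2 hp1).le (by linarith : 1 - p ≤ 1))
    positivity
  have hden := mul_neg_log_sum_le hL.le (by linarith [log_two_lt_d9]) hp0 hp1 hq hs
  simp only [logb]
  calc _ = (p - δ) * (δ * (p * -log p + (1 - p + δ) * -log (1 - p))) /
        (p * (log 2 * (δ * (1 - 2 * (p - δ))) -
          2 * (p - δ) * (1 - p + δ) * log (p * (1 - p)))) := by
        field_simp; ring
    _ ≤ (p - δ) * (p * (1 - p + δ) *
          (log (p - δ) * log (1 - p) - log p * log (1 - p + δ))) /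
        (p * (log 2 * ((p - δ) * (1 - p + δ) *
          -(log (p * (1 - p)) + log ((p - δ) * (1 - p + δ)))))) := by
        refine div_le_div₀ ?_ (mul_le_mul_of_nonneg_left hnum hq.le) ?_
          (mul_le_mul_of_nonneg_left hden hp0.le)
        · exact mul_nonneg hq.le (hnum_nonneg.trans hnum)
        · exact mul_pos hp0 (mul_pos hL (mul_pos (mul_pos hq hs) (neg_pos.2 hsum)))
    _ = _ := by field_simp; ring
end

section
/- Let K ≥ 2 and p be a real with 2/K ≤ p ≤ 1 - 1/K. Then: (i) H_b(p) - (1/K)·log(1-p) ≥ -(p - 1/K)(1 - p + 1/K)·log(p(1-p)); (ii) K·H_b(p) - log(1-p) ≥ 1; (iii) 1/(1 - 1/(K·p)) ≤ 2, where H_b(p) = -p log₂ p - (1-p) log₂(1-p) and logs are base 2. -/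
open Real

/-- Three elementary inequalities valid for `2/K ≤ p ≤ 1 - 1/K`, where
`H_b(p) = -p log₂ p - (1-p) log₂(1-p)` is the binary entropy. -/
theorem entropy_inequalities (K p : ℝ) (hK : 2 ≤ K)
    (hpl : 2 / K ≤ p) (hpu : p ≤ 1 - 1 / K) :
    ((-(p * logb 2 p) - (1 - p) * logb 2 (1 - p)) - (1 / K) * logb 2 (1 - p)
        ≥ -((p - 1 / K) * (1 - p + 1 / K) * logb 2 (p * (1 - p)))) ∧
    (K * (-(p * logb 2 p) - (1 - p) * logb 2 (1 - p)) - logb 2 (1 - p) ≥ 1) ∧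
    (1 / (1 - 1 / (K * p)) ≤ 2) := by
  have hK0 : (0:ℝ) < K := by linarith
  have hp0 : 0 < p := lt_of_lt_of_le (by positivity) hpl
  have hiK : (0:ℝ) < 1 / K := by positivity
  have hp1 : p < 1 := by linarith
  have h1p : 0 < 1 - p := by linarith
  have hKp : (2:ℝ) ≤ K * p := by
    have := (div_le_iff₀ hK0).mp hpl
    linarith [this]
  have hiK2 : 1 / K ≤ 2 / K := by
    apply div_le_div_of_nonneg_right <;> linarith
  have hpiK : 1 / K ≤ p := le_trans hiK2 hpl
  have hK1p : 1 / K ≤ 1 - p := by linarith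
  have ha0 : 0 ≤ -(logb 2 p) := by
    have := Real.logb_nonpos (b := 2) (by norm_num) hp0.le hp1.le
    linarith
  have hb0 : 0 ≤ -(logb 2 (1 - p)) := by
    have := Real.logb_nonpos (b := 2) (by norm_num) h1p.le (by linarith)
    linarith
  have hmul : logb 2 (p * (1 - p)) = logb 2 p + logb 2 (1 - p) :=
    Real.logb_mul hp0.ne' h1p.ne'
  have hhalf : logb 2 (1/2 : ℝ) = -1 := by
    rw [one_div, Real.logb_inv, Real.logb_self_eq_one] <;> norm_num
  refine ⟨?_, ?_, ?_⟩
  · -- part (i)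
    rw [hmul]
    set a := -(logb 2 p) with ha
    set b := -(logb 2 (1 - p)) with hb
    have hc1 : (p - 1/K) * (1 - p + 1/K) ≤ p := by nlinarith
    have hc2 : (p - 1/K) * (1 - p + 1/K) ≤ 1 - p + 1/K := by nlinarith
    have e1 : 0 ≤ (p - (p - 1/K) * (1 - p + 1/K)) * a :=
      mul_nonneg (by linarith) ha0
    have e2 : 0 ≤ ((1 - p + 1/K) - (p - 1/K) * (1 - p + 1/K)) * b :=
      mul_nonneg (by linarith) hb0
    have hla : logb 2 p = -a := by rw [ha]; ring
    have hlb : logb 2 (1 - p) = -b := by rw [hb]; ring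
    rw [hla, hlb]
    nlinarith [e1, e2]
  · -- part (ii)
    set a := -(logb 2 p) with ha
    set b := -(logb 2 (1 - p)) with hb
    have hla : logb 2 p = -a := by rw [ha]; ring
    have hlb : logb 2 (1 - p) = -b := by rw [hb]; ring
    rw [hla, hlb]
    rcases le_total p (1/2) with hc | hc
    · have ha1 : 1 ≤ a := by
        have := Real.logb_le_logb_of_le (b := 2) (by norm_num) hp0 hc
        rw [hhalf] at this
        linarith
      have t1 : (2:ℝ) * 1 ≤ (K * p) * a :=
        mul_le_mul hKp ha1 (by norm_num) (by positivity)
      have t2 : 0 ≤ (K * (1 - p)) * b :=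
        mul_nonneg (by positivity) hb0
      nlinarith [t1, t2, hb0]
    · have hb1 : 1 ≤ b := by
        have := Real.logb_le_logb_of_le (b := 2) (by norm_num) h1p (show 1 - p ≤ 1/2 by linarith)
        rw [hhalf] at this
        linarith
      have hK1 : (1:ℝ) ≤ K * (1 - p) := by
        have := (div_le_iff₀ hK0).mp hK1p
        linarith [this]
      have t1 : (1:ℝ) * 1 ≤ (K * (1 - p)) * b :=
        mul_le_mul hK1 hb1 (by norm_num) (by linarith)
      have t2 : 0 ≤ (K * p) * a := mul_nonneg (by positivity) ha0
      nlinarith [t1, t2, hb0]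
  · -- part (iii)
    have hKp0 : 0 < K * p := by positivity
    have h1 : 1 / (K * p) ≤ 1 / 2 := by
      apply div_le_div_of_nonneg_left <;> linarith
    have hd : (0:ℝ) < 1 - 1 / (K * p) := by linarith
    rw [div_le_iff₀ hd]
    have : 0 < 1 / (K * p) := by positivity
    linarith
end

section
/- Let K ≥ 1, 0 < ε < 1/2, and θ ∈ [k/(K+2), (k+1)/(K+2)] for some k ∈ {1,...,K}. Suppose nonnegative weights w_1,...,w_K (with w_i = E[T_i]μ_i) and estimates θ̂_i = i/(K+2) satisfy: w_i/w_{k-1} ≤ (1/(1-ε))·(ε/(1-ε))^{i'-1} when i = k - i' for 1 ≤ i' ≤ k-1 (relative to the normalizing total), and symmetrically for i > k, and w_k/∑_j w_j ≤ 1. Then the weighted risk ∑_{i=1}^K (w_i/∑_j w_j)·(i/(K+2) - θ)² ≤ (1/(K+2)²) · (1/(1-ε)) · (2·∑_{i=1}^∞ (ε/(1-ε))^{i-1}(i+1)² + 1). -/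
/-!
Split the risk at the index `k` nearest to `θ`. The term at `k` contributes at most `1/(K+2)²`,
and the term at distance `j ≥ 1` on either side has weight at most `(1/(1-ε)) qʲ⁻¹` with
`q = ε/(1-ε) < 1` and squared deviation at most `((j+1)/(K+2))²`, because `θ` lies in the cell
`[k/(K+2), (k+1)/(K+2)]`. Each side is therefore dominated by the convergent series
`(1/(1-ε)) ∑ qⁱ (i+2)² / (K+2)²`.
-/

open Finset

theorem Finset.sum_Icc_eq_sum_below_add_add_sum_above {M : Type*} [AddCommMonoid M]
    (f : ℕ → M) {k K : ℕ} (hk1 : 1 ≤ k) (hkK : k ≤ K) :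
    ∑ i ∈ Icc 1 K, f i
      = ∑ j ∈ Icc 1 (k - 1), f (k - j) + f k + ∑ j ∈ Icc 1 (K - k), f (k + j) := by
  have below : ∑ j ∈ Icc 1 (k - 1), f (k - j) = ∑ i ∈ Icc 1 (k - 1), f i := by
    refine sum_nbij' (k - ·) (k - ·) ?_ ?_ ?_ ?_ fun _ _ ↦ rfl <;>
      intro j hj <;> simp only [mem_Icc] at * <;> omega
  have above : ∑ j ∈ Icc 1 (K - k), f (k + j) = ∑ i ∈ Icc (k + 1) K, f i := by
    refine sum_nbij' (k + ·) (· - k) ?_ ?_ ?_ ?_ fun _ _ ↦ rfl <;>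
      intro j hj <;> simp only [mem_Icc] at * <;> omega
  rw [below, above, ← Ico_add_one_right_eq_Icc, ← Ico_add_one_right_eq_Icc,
    ← Ico_add_one_right_eq_Icc, Nat.sub_add_cancel hk1, ← sum_Ico_consecutive f hk1 (by omega),
    sum_eq_sum_Ico_succ_bot (by omega : k < K + 1), add_assoc]

lemma summable_pow_mul_add_two_sq {q : ℝ} (hq0 : 0 ≤ q) (hq1 : q < 1) :
    Summable fun i : ℕ ↦ q ^ i * ((i : ℝ) + 2) ^ 2 := by
  have hq : ‖q‖ < 1 := by rwa [Real.norm_eq_abs, abs_of_nonneg hq0]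
  have h2 := summable_pow_mul_geometric_of_norm_lt_one 2 hq
  have h1 := summable_pow_mul_geometric_of_norm_lt_one 1 hq
  have h0 := summable_geometric_of_lt_one hq0 hq1
  refine (h2.add ((h1.mul_left 4).add (h0.mul_left 4))).congr fun i ↦ ?_
  ring

lemma sum_Icc_pow_mul_sq_le_tsum {q : ℝ} (hq0 : 0 ≤ q) (hq1 : q < 1) (m : ℕ) :
    ∑ j ∈ Icc 1 m, q ^ (j - 1) * ((j : ℝ) + 1) ^ 2 ≤ ∑' i : ℕ, q ^ i * ((i : ℝ) + 2) ^ 2 := by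
  rw [← Ico_add_one_right_eq_Icc, sum_Ico_eq_sum_range, Nat.add_sub_cancel]
  calc ∑ i ∈ range m, q ^ (1 + i - 1) * (((1 + i : ℕ) : ℝ) + 1) ^ 2
      = ∑ i ∈ range m, q ^ i * ((i : ℝ) + 2) ^ 2 :=
        sum_congr rfl fun i _ ↦ by rw [Nat.add_sub_cancel_left]; push_cast; ring
    _ ≤ ∑' i : ℕ, q ^ i * ((i : ℝ) + 2) ^ 2 :=
        (summable_pow_mul_add_two_sq hq0 hq1).sum_le_tsum _ fun i _ ↦ by positivity

lemma sum_Icc_le_of_le_geometric {q c N : ℝ} (hq0 : 0 ≤ q) (hq1 : q < 1) (hc : 0 ≤ c) (m : ℕ)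
    {g : ℕ → ℝ} (hg : ∀ j ∈ Icc 1 m, g j ≤ c * q ^ (j - 1) * (((j : ℝ) + 1) / N) ^ 2) :
    ∑ j ∈ Icc 1 m, g j ≤ 1 / N ^ 2 * c * ∑' i : ℕ, q ^ i * ((i : ℝ) + 2) ^ 2 :=
  calc ∑ j ∈ Icc 1 m, g j
      ≤ ∑ j ∈ Icc 1 m, c * q ^ (j - 1) * (((j : ℝ) + 1) / N) ^ 2 := sum_le_sum hg
    _ = 1 / N ^ 2 * c * ∑ j ∈ Icc 1 m, q ^ (j - 1) * ((j : ℝ) + 1) ^ 2 := by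
      rw [mul_sum]
      exact sum_congr rfl fun j _ ↦ by ring
    _ ≤ 1 / N ^ 2 * c * ∑' i : ℕ, q ^ i * ((i : ℝ) + 2) ^ 2 := by
      gcongr
      exact sum_Icc_pow_mul_sq_le_tsum hq0 hq1 m

lemma sq_div_sub_le {N a x θ : ℝ} (hN : 0 < N) (hθl : a / N ≤ θ) (hθr : θ ≤ (a + 1) / N) :
    (x / N - θ) ^ 2 ≤ ((|x - a| + 1) / N) ^ 2 := by
  have upper : (x - a) / N ≤ (|x - a| + 1) / N := by
    gcongr
    linarith [le_abs_self (x - a)]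
  have lower : -((|x - a| + 1) / N) ≤ (x - a - 1) / N := by
    rw [← neg_div]
    gcongr
    linarith [neg_abs_le (x - a)]
  rw [sub_div] at upper
  rw [sub_div, sub_div] at lower
  rw [add_div] at hθr
  exact sq_le_sq' (by linarith) (by linarith)

theorem weighted_risk_bound_general (K k : ℕ) (hk1 : 1 ≤ k) (hkK : k ≤ K)
    (ε θ : ℝ) (hε0 : 0 < ε) (hε : ε < 1 / 2)
    (hθl : (k : ℝ) / ((K : ℝ) + 2) ≤ θ) (hθr : θ ≤ ((k : ℝ) + 1) / ((K : ℝ) + 2))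
    (w : ℕ → ℝ) (hw : ∀ i, 0 ≤ w i)
    (hleft : ∀ i, 1 ≤ i → i ≤ k - 1 →
      w (k - i) ≤ (1 / (1 - ε)) * (ε / (1 - ε)) ^ (i - 1) * ∑ j ∈ Finset.Icc 1 K, w j)
    (hright : ∀ i, 1 ≤ i → i ≤ K - k →
      w (k + i) ≤ (1 / (1 - ε)) * (ε / (1 - ε)) ^ (i - 1) * ∑ j ∈ Finset.Icc 1 K, w j) :
    ∑ i ∈ Finset.Icc 1 K,
        (w i / ∑ j ∈ Finset.Icc 1 K, w j) * ((i : ℝ) / ((K : ℝ) + 2) - θ) ^ 2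
      ≤ (1 / ((K : ℝ) + 2) ^ 2) * (1 / (1 - ε)) *
          (2 * ∑' i : ℕ, (ε / (1 - ε)) ^ i * ((i : ℝ) + 2) ^ 2 + 1) := by
  set N : ℝ := (K : ℝ) + 2
  set S := ∑ j ∈ Icc 1 K, w j
  set c := 1 / (1 - ε)
  set q := ε / (1 - ε)
  have hN : 0 < N := by positivity
  have hS : 0 ≤ S := sum_nonneg fun i _ ↦ hw i
  have hq0 : 0 ≤ q := div_nonneg hε0.le (by linarith)
  have hq1 : q < 1 := (div_lt_one (by linarith)).2 (by linarith)
  have hc : 1 ≤ c := one_le_one_div (by linarith) (by linarith)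
  have term (i d : ℕ) (hd : |(i : ℝ) - k| = d) (b : ℝ) (hb : 0 ≤ b) (hwi : w i ≤ b * S) :
      w i / S * ((i : ℝ) / N - θ) ^ 2 ≤ b * (((d : ℝ) + 1) / N) ^ 2 :=
    hd ▸ mul_le_mul (div_le_of_le_mul₀ hS hb hwi) (sq_div_sub_le hN hθl hθr) (sq_nonneg _) hb
  rw [sum_Icc_eq_sum_below_add_add_sum_above _ hk1 hkK]
  have below := sum_Icc_le_of_le_geometric hq0 hq1 (c := c) (N := N) (by positivity) (k - 1)
      (g := fun j ↦ w (k - j) / S * (((k - j : ℕ) : ℝ) / N - θ) ^ 2) fun j hj ↦ by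
    obtain ⟨hj1, hjk⟩ := mem_Icc.1 hj
    refine term (k - j) j ?_ _ (by positivity) (hleft j hj1 hjk)
    rw [Nat.cast_sub (by omega), sub_sub_cancel_left, abs_neg, Nat.abs_cast]
  have above := sum_Icc_le_of_le_geometric hq0 hq1 (c := c) (N := N) (by positivity) (K - k)
      (g := fun j ↦ w (k + j) / S * (((k + j : ℕ) : ℝ) / N - θ) ^ 2) fun j hj ↦ by
    obtain ⟨hj1, hjk⟩ := mem_Icc.1 hj
    refine term (k + j) j ?_ _ (by positivity) (hright j hj1 hjk)
    rw [Nat.cast_add, add_sub_cancel_left, Nat.abs_cast]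
  have middle := term k 0 (by simp) c (by positivity)
    ((single_le_sum (fun i _ ↦ hw i) (mem_Icc.2 ⟨hk1, hkK⟩)).trans (le_mul_of_one_le_left hS hc))
  clear_value N -- otherwise `ring` expands `N ^ 2` as a polynomial in `K` before inverting it
  linear_combination below + middle + above

/-- The core risk-bound computation: if the normalized weights decay geometrically
away from the index `k` nearest to `θ`, the weighted quadratic risk is
`O(1/(K+2)²)`. -/
theorem weighted_risk_bound (K k : ℕ) (hk1 : 1 ≤ k) (hkK : k ≤ K)
    (ε θ : ℝ) (hε0 : 0 < ε) (hε : ε < 1 / 2)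
    (hθl : (k : ℝ) / ((K : ℝ) + 2) ≤ θ) (hθr : θ ≤ ((k : ℝ) + 1) / ((K : ℝ) + 2))
    (w : ℕ → ℝ) (hw : ∀ i, 0 ≤ w i)
    (htot : 0 < ∑ j ∈ Finset.Icc 1 K, w j)
    (hleft : ∀ i, 1 ≤ i → i ≤ k - 1 →
      w (k - i) ≤ (1 / (1 - ε)) * (ε / (1 - ε)) ^ (i - 1) * ∑ j ∈ Finset.Icc 1 K, w j)
    (hright : ∀ i, 1 ≤ i → i ≤ K - k →
      w (k + i) ≤ (1 / (1 - ε)) * (ε / (1 - ε)) ^ (i - 1) * ∑ j ∈ Finset.Icc 1 K, w j) :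
    ∑ i ∈ Finset.Icc 1 K,
        (w i / ∑ j ∈ Finset.Icc 1 K, w j) * ((i : ℝ) / ((K : ℝ) + 2) - θ) ^ 2
      ≤ (1 / ((K : ℝ) + 2) ^ 2) * (1 / (1 - ε)) *
          (2 * ∑' i : ℕ, (ε / (1 - ε)) ^ i * ((i : ℝ) + 2) ^ 2 + 1) :=
  weighted_risk_bound_general K k hk1 hkK ε θ hε0 hε hθl hθr w hw hleft hright
end
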